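/- Let M ≥ 1 and let θ : {0,…,M} × {0,…,M} → ℝ be a phase configuration on the (M+1) × (M+1) square grid such that for every pair of nearest-neighbor sites the difference of phases is not congruent to π modulo 2π. Then the sum of the lattice curls over all M² unit cells equals the sum of ⟦θ(q) − θ(p)⟧ over the 4M consecutive directed edges (p, q) of the boundary cycle of the grid traversed counterclockwise. (The total vortex charge inside a free-boundary grid equals 2π times the winding number of the phases around the boundary.) -/

import Mathlib

/-! Away from the branch point `π` the map `wrap` is odd, so reversing an edge negates its
wrapped phase difference. Each interior edge therefore enters the curls of its two adjacent
cells with opposite signs and cancels (discrete Green's theorem), leaving the boundary edges. -/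

open Real Finset

/-- `wrap x` is the unique number in the interval `(-π, π]` congruent to `x` modulo `2π`. -/
noncomputable def wrap (x : ℝ) : ℝ := toIocMod Real.two_pi_pos (-Real.pi) x

/-- `x` is not congruent to `π` modulo `2π`. -/
def NotPiMod (x : ℝ) : Prop := ∀ k : ℤ, x ≠ Real.pi + 2 * Real.pi * k

/-- The lattice curl of the unit cell with lower-left corner `(i, j)`, whose corners in
counterclockwise cyclic order are `(i,j), (i+1,j), (i+1,j+1), (i,j+1)`. -/
noncomputable def cellCurl (θ : ℕ → ℕ → ℝ) (i j : ℕ) : ℝ :=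
  wrap (θ (i + 1) j - θ i j) + wrap (θ (i + 1) (j + 1) - θ (i + 1) j) +
    wrap (θ i (j + 1) - θ (i + 1) (j + 1)) + wrap (θ i j - θ i (j + 1))

theorem wrap_lt_pi {x : ℝ} (h : NotPiMod x) : wrap x < π := by
  have hmem := toIocMod_mem_Ioc two_pi_pos (-π) x
  have hx := toIocMod_add_toIocDiv_zsmul two_pi_pos (-π) x
  rw [zsmul_eq_mul] at hx
  refine lt_of_le_of_ne (by rw [wrap]; linarith [hmem.2]) fun hπ => ?_
  rw [wrap] at hπ
  exact h (toIocDiv two_pi_pos (-π) x) (by linarith)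

theorem wrap_neg {x : ℝ} (h : NotPiMod x) : wrap (-x) = -wrap x := by
  have hlo := (toIocMod_mem_Ioc two_pi_pos (-π) x).1
  have hx := toIocMod_add_toIocDiv_zsmul two_pi_pos (-π) x
  have hhi := wrap_lt_pi h
  unfold wrap at hhi ⊢
  rw [toIocMod_eq_iff]
  refine ⟨⟨by linarith, by linarith⟩, -toIocDiv two_pi_pos (-π) x, ?_⟩
  rw [neg_zsmul]
  linarith

theorem wrap_sub_comm {a b : ℝ} (h : NotPiMod (b - a)) : wrap (a - b) = -wrap (b - a) := by
  rw [← wrap_neg h, neg_sub]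

/-- Discrete Green's theorem on an `M × N` rectangle. -/
theorem sum_range_sum_range_curl {G : Type*} [AddCommGroup G] (M N : ℕ) (H V : ℕ → ℕ → G) :
    ∑ i ∈ range M, ∑ j ∈ range N, ((H i j - H i (j + 1)) + (V (i + 1) j - V i j)) =
      ∑ i ∈ range M, (H i 0 - H i N) + ∑ j ∈ range N, (V M j - V 0 j) := by
  simp only [sum_add_distrib]
  rw [sum_comm (f := fun i j => V (i + 1) j - V i j)]
  exact congr_arg₂ (· + ·) (sum_congr rfl fun i _ => sum_range_sub' (H i) N)
    (sum_congr rfl fun j _ => sum_range_sub (V · j) M)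

theorem cellCurl_eq_curl {θ : ℕ → ℕ → ℝ} {i j : ℕ}
    (hE : NotPiMod (θ (i + 1) (j + 1) - θ i (j + 1))) (hN : NotPiMod (θ i (j + 1) - θ i j)) :
    cellCurl θ i j =
      (wrap (θ (i + 1) j - θ i j) - wrap (θ (i + 1) (j + 1) - θ i (j + 1))) +
        (wrap (θ (i + 1) (j + 1) - θ (i + 1) j) - wrap (θ i (j + 1) - θ i j)) := by
  rw [cellCurl, wrap_sub_comm hE, wrap_sub_comm hN]
  ring

theorem sum_cellCurl_eq_boundary_winding_general (M : ℕ) (θ : ℕ → ℕ → ℝ)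
    (hE : ∀ i j : ℕ, i < M → j ≤ M → NotPiMod (θ (i + 1) j - θ i j))
    (hN : ∀ i j : ℕ, i ≤ M → j < M → NotPiMod (θ i (j + 1) - θ i j)) :
    ∑ i ∈ Finset.range M, ∑ j ∈ Finset.range M, cellCurl θ i j =
      (∑ i ∈ Finset.range M, wrap (θ (i + 1) 0 - θ i 0)) +
        (∑ j ∈ Finset.range M, wrap (θ M (j + 1) - θ M j)) +
        (∑ i ∈ Finset.range M, wrap (θ i M - θ (i + 1) M)) +
        (∑ j ∈ Finset.range M, wrap (θ 0 j - θ 0 (j + 1))) := by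
  have hcells : ∀ i ∈ range M, ∀ j ∈ range M, cellCurl θ i j = _ := fun i hi j hj =>
    cellCurl_eq_curl (hE i (j + 1) (mem_range.1 hi) (mem_range.1 hj))
      (hN i j (mem_range.1 hi).le (mem_range.1 hj))
  have htop : ∀ i ∈ range M, wrap (θ i M - θ (i + 1) M) = -wrap (θ (i + 1) M - θ i M) :=
    fun i hi => wrap_sub_comm (hE i M (mem_range.1 hi) le_rfl)
  have hleft : ∀ j ∈ range M, wrap (θ 0 j - θ 0 (j + 1)) = -wrap (θ 0 (j + 1) - θ 0 j) :=
    fun j hj => wrap_sub_comm (hN 0 j (Nat.zero_le M) (mem_range.1 hj))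
  rw [sum_congr rfl fun i hi => sum_congr rfl (hcells i hi)]
  refine (sum_range_sum_range_curl M M (fun i j => wrap (θ (i + 1) j - θ i j))
    (fun i j => wrap (θ i (j + 1) - θ i j))).trans ?_
  rw [sum_congr rfl htop, sum_congr rfl hleft]
  simp only [sum_sub_distrib, sum_neg_distrib]
  abel

/-- On the `(M+1) × (M+1)` free-boundary grid with sites `{0,…,M} × {0,…,M}` (`M ≥ 1`),
if no nearest-neighbor phase difference is congruent to `π` mod `2π`, then the sum of
the lattice curls over all `M²` unit cells equals the sum of `⟦θ(q) − θ(p)⟧` over the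
`4M` consecutive directed edges `(p, q)` of the boundary cycle traversed
counterclockwise (bottom, then right, then top, then left). -/
theorem sum_cellCurl_eq_boundary_winding (M : ℕ) (hM : 1 ≤ M) (θ : ℕ → ℕ → ℝ)
    (hE : ∀ i j : ℕ, i < M → j ≤ M → NotPiMod (θ (i + 1) j - θ i j))
    (hN : ∀ i j : ℕ, i ≤ M → j < M → NotPiMod (θ i (j + 1) - θ i j)) :
    ∑ i ∈ Finset.range M, ∑ j ∈ Finset.range M, cellCurl θ i j =
      (∑ i ∈ Finset.range M, wrap (θ (i + 1) 0 - θ i 0)) +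
        (∑ j ∈ Finset.range M, wrap (θ M (j + 1) - θ M j)) +
        (∑ i ∈ Finset.range M, wrap (θ i M - θ (i + 1) M)) +
        (∑ j ∈ Finset.range M, wrap (θ 0 j - θ 0 (j + 1))) :=
  sum_cellCurl_eq_boundary_winding_general M θ hE hN
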